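/- arXiv:2103.05792 — 3 statements merged into one kernel-verified Lean document; each statement's English description precedes it below -/
import Mathlib

section
/- Schwartz–Zippel lemma: if f is a nonzero multivariate polynomial in n variables over the field ZMod q with total degree at most t, then the number of points x ∈ (ZMod q)^n with f(x) = 0 is at most t·q^(n−1); equivalently, a uniformly random point of (ZMod q)^n is a zero of f with probability at most t/q. -/
open Finset MvPolynomial

namespace MvPolynomial

variable {R : Type*} [CommRing R] [IsDomain R] [Fintype R] [DecidableEq R]
  {n : ℕ} {p : MvPolynomial (Fin n) R}

theorem card_mul_card_zeros_le (hp : p ≠ 0) :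
    Fintype.card R * #{x | eval x p = 0} ≤ p.totalDegree * Fintype.card R ^ n := by
  have hR : (0 : ℚ≥0) < Fintype.card R := by exact_mod_cast Fintype.card_pos
  have h := schwartz_zippel_totalDegree hp univ
  rw [Fintype.piFinset_univ, card_univ, div_le_div_iff₀ (by positivity) hR] at h
  rw [mul_comm]
  exact_mod_cast h

theorem card_zeros_le (hp : p ≠ 0) :
    #{x | eval x p = 0} ≤ p.totalDegree * Fintype.card R ^ (n - 1) := by
  have hR : 0 < Fintype.card R := Fintype.card_pos
  refine le_of_mul_le_mul_left ?_ hR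
  calc Fintype.card R * #{x | eval x p = 0}
      ≤ p.totalDegree * Fintype.card R ^ n := card_mul_card_zeros_le hp
    _ ≤ p.totalDegree * Fintype.card R ^ (n - 1 + 1) := by
      gcongr; omega
    _ = Fintype.card R * (p.totalDegree * Fintype.card R ^ (n - 1)) := by ring

theorem card_zeros_div_le (hp : p ≠ 0) :
    (#{x | eval x p = 0} : ℝ) / Fintype.card R ^ n ≤ p.totalDegree / Fintype.card R := by
  have hR : (0 : ℝ) < Fintype.card R := by exact_mod_cast Fintype.card_pos
  rw [div_le_div_iff₀ (by positivity) hR, mul_comm]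
  exact_mod_cast card_mul_card_zeros_le hp

end MvPolynomial

/-- Schwartz–Zippel lemma over `ZMod q`: a nonzero multivariate polynomial `f` in `n`
variables of total degree at most `t` has at most `t * q ^ (n - 1)` zeros in
`(ZMod q)^n`; equivalently, a uniformly random point is a zero of `f` with
probability at most `t / q`. -/
theorem schwartz_zippel_zmod (q : ℕ) [Fact (Nat.Prime q)] (n t : ℕ)
    (f : MvPolynomial (Fin n) (ZMod q)) (hf : f ≠ 0) (hdeg : f.totalDegree ≤ t) :
    (Finset.univ.filter fun x : Fin n → ZMod q => MvPolynomial.eval x f = 0).card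
      ≤ t * q ^ (n - 1) ∧
    ((Finset.univ.filter fun x : Fin n → ZMod q =>
        MvPolynomial.eval x f = 0).card : ℝ) / (q : ℝ) ^ n ≤ (t : ℝ) / q := by
  have hq : (0 : ℝ) < q := by exact_mod_cast (Fact.out : q.Prime).pos
  constructor
  · calc _ ≤ f.totalDegree * q ^ (n - 1) := by simpa only [ZMod.card] using card_zeros_le hf
      _ ≤ t * q ^ (n - 1) := by gcongr
  · calc _ ≤ (f.totalDegree : ℝ) / q := by simpa only [ZMod.card] using card_zeros_div_le hf
      _ ≤ (t : ℝ) / q := by gcongr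
end

section
/- Decryption exponent of Secure Join: let B be an invertible (m(t+1)+3)×(m(t+1)+3) matrix over ZMod q and B* := det(B)·(B⁻¹)ᵀ. For the row encoding w = (h, γ₂·a₁⁰,…,γ₂·a₁ᵗ, …, γ₂·a_m⁰,…,γ₂·a_mᵗ, γ₁, 0) and token encoding v = (k, p_{1,0},…,p_{1,t}, …, p_{m,0},…,p_{m,t}, 0, δ), the inner product of the transformed vectors satisfies ⟨v·B, w·B*⟩ = det(B) · (k·h + γ₂ · ∑_{i=1}^{m} P_i(a_i)), where v·B denotes Matrix.vecMul and P_i is the polynomial with coefficients p_{i,0},…,p_{i,t}. -/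
/-! Since `det B • B⁻¹ = adjugate B` and `B * adjugate B = det B • 1`, the pairing
`⟨v B, w B*⟩` is `det B · ⟨v, w⟩`. The encodings are aligned so that `⟨v, w⟩ = k h + γ₂ ∑ᵢ Pᵢ(aᵢ)`:
the coefficient `p_{i,j}` meets `γ₂ aᵢʲ`, and the randomizers `γ₁`, `δ` each meet a `0`. -/

open Matrix

/-- Index type for Secure Join vectors: one join-value slot, `m(t+1)` attribute-power
slots (attribute `i`, power `j ∈ {0,…,t}`), and two randomizer slots; its
cardinality is `m(t+1)+3`. -/
abbrev SJIndex (m t : ℕ) : Type := Unit ⊕ (Fin m × Fin (t + 1)) ⊕ Fin 2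

/-- Row encoding `w = (h, γ₂·a₁⁰,…,γ₂·a₁ᵗ, …, γ₂·a_m⁰,…,γ₂·a_mᵗ, γ₁, 0)`. -/
def sjRow {q m t : ℕ} (h γ₁ γ₂ : ZMod q) (a : Fin m → ZMod q) :
    SJIndex m t → ZMod q :=
  Sum.elim (fun _ => h) (Sum.elim (fun p => γ₂ * a p.1 ^ (p.2 : ℕ)) ![γ₁, 0])

/-- Token encoding `v = (k, p_{1,0},…,p_{1,t}, …, p_{m,0},…,p_{m,t}, 0, δ)`. -/
def sjToken {q m t : ℕ} (k δ : ZMod q) (p : Fin m → Fin (t + 1) → ZMod q) :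
    SJIndex m t → ZMod q :=
  Sum.elim (fun _ => k) (Sum.elim (fun pr => p pr.1 pr.2) ![0, δ])

namespace Matrix

variable {n R : Type*} [Fintype n] [DecidableEq n] [CommRing R]

theorem det_smul_nonsing_inv (A : Matrix n n R) (hA : IsUnit A.det) :
    A.det • A⁻¹ = adjugate A := by
  rw [A.nonsing_inv_apply hA, smul_smul, hA.mul_val_inv, one_smul]

theorem vecMul_dotProduct_vecMul_adjugate_transpose (A : Matrix n n R) (v w : n → R) :
    (v ᵥ* A) ⬝ᵥ (w ᵥ* (adjugate A)ᵀ) = A.det * (v ⬝ᵥ w) := by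
  rw [vecMul_transpose, ← dotProduct_mulVec, mulVec_mulVec, mul_adjugate, smul_mulVec,
    one_mulVec, dotProduct_smul, smul_eq_mul]

end Matrix

theorem sjToken_dotProduct_sjRow {q m t : ℕ} (h γ₁ γ₂ k δ : ZMod q) (a : Fin m → ZMod q)
    (p : Fin m → Fin (t + 1) → ZMod q) :
    sjToken k δ p ⬝ᵥ sjRow h γ₁ γ₂ a
      = k * h + γ₂ * ∑ i, ∑ j : Fin (t + 1), p i j * a i ^ (j : ℕ) := by
  simp only [sjToken, sjRow, sumElim_dotProduct_sumElim]
  simp [dotProduct, Fintype.sum_prod_type, Finset.mul_sum, mul_left_comm]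

theorem sj_decryption_exponent_general (q : ℕ) (m t : ℕ)
    (h γ₁ γ₂ k δ : ZMod q) (a : Fin m → ZMod q)
    (p : Fin m → Fin (t + 1) → ZMod q)
    (B : Matrix (SJIndex m t) (SJIndex m t) (ZMod q)) (hB : IsUnit B.det) :
    (Matrix.vecMul (sjToken (q := q) (m := m) (t := t) k δ p) B) ⬝ᵥ
        (Matrix.vecMul (sjRow h γ₁ γ₂ a) (B.det • (B⁻¹)ᵀ))
      = B.det * (k * h + γ₂ * ∑ i, ∑ j : Fin (t + 1), p i j * a i ^ (j : ℕ)) := by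
  rw [← transpose_smul, B.det_smul_nonsing_inv hB,
    vecMul_dotProduct_vecMul_adjugate_transpose, sjToken_dotProduct_sjRow]

/-- Decryption exponent of Secure Join: for invertible `B` and `B* = det B • (B⁻¹)ᵀ`,
`⟨v·B, w·B*⟩ = det B · (k·h + γ₂·∑ᵢ Pᵢ(aᵢ))`, where `Pᵢ(x) = ∑ⱼ p_{i,j} xʲ`. -/
theorem sj_decryption_exponent (q : ℕ) [Fact (Nat.Prime q)] (m t : ℕ)
    (h γ₁ γ₂ k δ : ZMod q) (a : Fin m → ZMod q)
    (p : Fin m → Fin (t + 1) → ZMod q)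
    (B : Matrix (SJIndex m t) (SJIndex m t) (ZMod q)) (hB : IsUnit B.det) :
    (Matrix.vecMul (sjToken (q := q) (m := m) (t := t) k δ p) B) ⬝ᵥ
        (Matrix.vecMul (sjRow h γ₁ γ₂ a) (B.det • (B⁻¹)ᵀ))
      = B.det * (k * h + γ₂ * ∑ i, ∑ j : Fin (t + 1), p i j * a i ^ (j : ℕ)) :=
  sj_decryption_exponent_general q m t h γ₁ γ₂ k δ a p B hB
end

section
/- Correctness of the function-hiding inner-product encryption decryption: under the bilinear pairing law, let B be an invertible n×n matrix over ZMod q, B* := det(B)·(B⁻¹)ᵀ, and let α, β ∈ ZMod q be nonzero with det(B) ≠ 0 in ZMod q. For v, w ∈ (ZMod q)^n set K₁ = g₁^{(α·det B).val}, K₂ᵢ = g₁^{((α·(v·B))ᵢ).val}, C₁ = g₂^{β.val}, C₂ᵢ = g₂^{((β·(w·B*))ᵢ).val}, and define D₁ = e(K₁, C₁) and D₂ = ∏ᵢ e(K₂ᵢ, C₂ᵢ). If ε has order q, then D₁ = ε^{(α·β·det B).val}, D₂ = ε^{(α·β·det B·⟨v,w⟩).val}, and for every z ∈ ZMod q, D₁^{z.val}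 = D₂ if and only if z = ⟨v, w⟩, where ⟨v,w⟩ = ∑_i v_i·w_i and v·B denotes Matrix.vecMul. -/
/-!
Since `ε` has order `q`, the map `a ↦ ε ^ a.val` on `ZMod q` is injective and turns sums into
products, so bilinearity of `e` evaluates both decryption values as powers of `ε`. The exponent of
`D₂` is `α β ⟪v B, w (adj B)ᵀ⟫ = α β det B ⟪v, w⟫`, because `B* = adj B` and `B adj B = det B • 1`.
The equivalence is then cancellation of the nonzero factor `α β det B`.
-/

open Matrix

section PowVal

variable {G : Type*} {q : ℕ} {ε : G}

theorem pow_val_mul [Monoid G] (hε : orderOf ε = q) (a b : ZMod q) :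
    ε ^ (a * b).val = ε ^ (a.val * b.val) := by
  subst hε
  rw [ZMod.val_mul, pow_mod_orderOf]

theorem pow_val_sum [CommMonoid G] [NeZero q] (hε : orderOf ε = q) {ι : Type*} (s : Finset ι)
    (f : ι → ZMod q) : ε ^ (∑ i ∈ s, f i).val = ∏ i ∈ s, ε ^ (f i).val := by
  induction s using Finset.cons_induction with
  | empty => simp
  | cons i s hi ih =>
    subst hε
    rw [Finset.sum_cons, Finset.prod_cons, ZMod.val_add, pow_mod_orderOf, pow_add, ih]

theorem pow_val_injective [Monoid G] [NeZero q] (hε : orderOf ε = q) :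
    Function.Injective fun a : ZMod q => ε ^ a.val := fun a b h =>
  ZMod.val_injective q <| pow_injOn_Iio_orderOf (by simp [hε, a.val_lt])
    (by simp [hε, b.val_lt]) h

end PowVal

theorem pairing_pow_val {G₁ G₂ GT : Type*} [Group G₁] [Group G₂] [Group GT] {q : ℕ}
    {g₁ : G₁} {g₂ : G₂} {e : G₁ → G₂ → GT}
    (hbil : ∀ x y : ℤ, e (g₁ ^ x) (g₂ ^ y) = e g₁ g₂ ^ (x * y))
    (hord : orderOf (e g₁ g₂) = q) (a b : ZMod q) :
    e (g₁ ^ a.val) (g₂ ^ b.val) = e g₁ g₂ ^ (a * b).val := by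
  have h := hbil a.val b.val
  rwa [zpow_natCast, zpow_natCast, ← Nat.cast_mul, zpow_natCast, ← pow_val_mul hord] at h

theorem Matrix.vecMul_dotProduct_vecMul_adjugate_transpose_s13 {R ι : Type*} [CommRing R] [Fintype ι]
    [DecidableEq ι] (B : Matrix ι ι R) (v w : ι → R) :
    v ᵥ* B ⬝ᵥ w ᵥ* B.adjugateᵀ = B.det * (v ⬝ᵥ w) := by
  rw [vecMul_transpose, dotProduct_mulVec, vecMul_vecMul, mul_adjugate, vecMul_smul, vecMul_one,
    smul_dotProduct, smul_eq_mul]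

theorem Matrix.det_smul_inv_eq_adjugate {R ι : Type*} [CommRing R] [Fintype ι]
    [DecidableEq ι] {B : Matrix ι ι R} (hB : IsUnit B.det) : B.det • B⁻¹ = B.adjugate := by
  rw [nonsing_inv_apply B hB, smul_smul, IsUnit.mul_val_inv, one_smul]

theorem ipe_decrypt_correct_general (q : ℕ) [Fact (Nat.Prime q)]
    {G₁ G₂ GT : Type*} [CommGroup G₁] [CommGroup G₂] [CommGroup GT]
    (g₁ : G₁) (g₂ : G₂) (e : G₁ → G₂ → GT)
    (hbil : ∀ x y : ℤ, e (g₁ ^ x) (g₂ ^ y) = (e g₁ g₂) ^ (x * y))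
    (hord : orderOf (e g₁ g₂) = q)
    (n : ℕ) (B : Matrix (Fin n) (Fin n) (ZMod q)) (hB : IsUnit B.det)
    (α β : ZMod q) (hα : α ≠ 0) (hβ : β ≠ 0)
    (v w : Fin n → ZMod q) :
    e (g₁ ^ (α * B.det).val) (g₂ ^ β.val)
        = (e g₁ g₂) ^ (α * β * B.det).val ∧
    (∏ i, e (g₁ ^ (α * Matrix.vecMul v B i).val)
          (g₂ ^ (β * Matrix.vecMul w (B.det • (B⁻¹)ᵀ) i).val))
        = (e g₁ g₂) ^ (α * β * B.det * (v ⬝ᵥ w)).val ∧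
    ∀ z : ZMod q,
      (e (g₁ ^ (α * B.det).val) (g₂ ^ β.val)) ^ z.val
          = (∏ i, e (g₁ ^ (α * Matrix.vecMul v B i).val)
              (g₂ ^ (β * Matrix.vecMul w (B.det • (B⁻¹)ᵀ) i).val))
        ↔ z = v ⬝ᵥ w := by
  have hD₁ : e (g₁ ^ (α * B.det).val) (g₂ ^ β.val) = e g₁ g₂ ^ (α * β * B.det).val := by
    rw [pairing_pow_val hbil hord, mul_right_comm]
  have hD₂ : ∏ i, e (g₁ ^ (α * (v ᵥ* B) i).val) (g₂ ^ (β * (w ᵥ* (B.det • (B⁻¹)ᵀ)) i).val)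
      = e g₁ g₂ ^ (α * β * B.det * (v ⬝ᵥ w)).val := by
    simp only [pairing_pow_val hbil hord, ← pow_val_sum hord]
    rw [← transpose_smul, Matrix.det_smul_inv_eq_adjugate hB, mul_assoc,
      ← vecMul_dotProduct_vecMul_adjugate_transpose_s13, dotProduct, Finset.mul_sum]
    simp only [mul_mul_mul_comm]
  refine ⟨hD₁, hD₂, fun z => ?_⟩
  rw [hD₁, hD₂, ← pow_mul, ← pow_val_mul hord, (pow_val_injective hord).eq_iff]
  exact mul_right_inj' (mul_ne_zero (mul_ne_zero hα hβ) hB.ne_zero)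

/-- Correctness of function-hiding inner-product encryption decryption:
with `K₁ = g₁^{(α·det B).val}`, `K₂ᵢ = g₁^{(α·(v·B))ᵢ.val}`, `C₁ = g₂^{β.val}`,
`C₂ᵢ = g₂^{(β·(w·B*))ᵢ.val}` where `B* = det B • (B⁻¹)ᵀ`, the decryption values are
`D₁ = ε^{(α·β·det B).val}` and `D₂ = ε^{(α·β·det B·⟨v,w⟩).val}`, and for every
`z : ZMod q`, `D₁^{z.val} = D₂` iff `z = ⟨v, w⟩`. -/
theorem ipe_decrypt_correct (q : ℕ) [Fact (Nat.Prime q)]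
    {G₁ G₂ GT : Type*} [CommGroup G₁] [CommGroup G₂] [CommGroup GT]
    (g₁ : G₁) (g₂ : G₂) (e : G₁ → G₂ → GT)
    (hbil : ∀ x y : ℤ, e (g₁ ^ x) (g₂ ^ y) = (e g₁ g₂) ^ (x * y))
    (hord : orderOf (e g₁ g₂) = q)
    (n : ℕ) (B : Matrix (Fin n) (Fin n) (ZMod q)) (hB : IsUnit B.det)
    (hBdet : B.det ≠ 0) (α β : ZMod q) (hα : α ≠ 0) (hβ : β ≠ 0)
    (v w : Fin n → ZMod q) :
    e (g₁ ^ (α * B.det).val) (g₂ ^ β.val)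
        = (e g₁ g₂) ^ (α * β * B.det).val ∧
    (∏ i, e (g₁ ^ (α * Matrix.vecMul v B i).val)
          (g₂ ^ (β * Matrix.vecMul w (B.det • (B⁻¹)ᵀ) i).val))
        = (e g₁ g₂) ^ (α * β * B.det * (v ⬝ᵥ w)).val ∧
    ∀ z : ZMod q,
      (e (g₁ ^ (α * B.det).val) (g₂ ^ β.val)) ^ z.val
          = (∏ i, e (g₁ ^ (α * Matrix.vecMul v B i).val)
              (g₂ ^ (β * Matrix.vecMul w (B.det • (B⁻¹)ᵀ) i).val))
        ↔ z = v ⬝ᵥ w :=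
  ipe_decrypt_correct_general q g₁ g₂ e hbil hord n B hB α β hα hβ v w
end
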